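/- The function G(x) = ln|det x| + N/2 on invertible N×N real matrices is self-dual under the Legendre transform: if y = G'(x) then ⟨x,y⟩ − G(x) = G(y). -/

import Mathlib

/-!
By Jacobi's formula the differential of `log |det|` at an invertible `x` is `v ↦ tr (x⁻¹ v)`,
so the matrix `y` of partial derivatives (indexed as in the pairing `⟨x, y⟩ = tr (x y)`) is
`x⁻¹`. Hence `⟨x, y⟩ = tr 1 = N`, while `log |det x⁻¹| = - log |det x|`, and the two constants
`N / 2` add up to the `N` coming from the pairing.
-/

attribute [local instance] Matrix.normedAddCommGroup Matrix.normedSpace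

namespace Matrix

variable {ι : Type*} [Fintype ι] [DecidableEq ι]

theorem det_updateRow_eq_sum_mul_adjugate {R : Type*} [CommRing R] (A : Matrix ι ι R) (i : ι)
    (w : ι → R) : (A.updateRow i w).det = ∑ j, w j * A.adjugate j i := by
  rw [← det_transpose, ← updateCol_transpose, ← cramer_apply, cramer_eq_adjugate_mulVec,
    ← adjugate_transpose]
  simp only [mulVec, dotProduct, transpose_apply, mul_comm]

section Calculus

variable {𝕜 : Type*} [NontriviallyNormedField 𝕜]

noncomputable def detContinuousMultilinearMap :
    ContinuousMultilinearMap 𝕜 (fun _ : ι => ι → 𝕜) 𝕜 :=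
  { (detRowAlternating : (ι → 𝕜) [⋀^ι]→ₗ[𝕜] 𝕜).toMultilinearMap with
    cont := continuous_id.matrix_det }

noncomputable def traceMulCLM (B : Matrix ι ι 𝕜) : Matrix ι ι 𝕜 →L[𝕜] 𝕜 where
  toLinearMap := traceLinearMap ι 𝕜 𝕜 ∘ₗ LinearMap.mulLeft 𝕜 B
  cont := (continuous_const.matrix_mul continuous_id).matrix_trace

@[simp]
theorem traceMulCLM_apply (B v : Matrix ι ι 𝕜) : traceMulCLM B v = trace (B * v) := rfl

-- `Matrix ι ι 𝕜` carries the sup norm of `ι → ι → 𝕜`, so the derivative of `det` as a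
-- multilinear map in the rows is its derivative as a function of the matrix.
theorem hasFDerivAt_det (A : Matrix ι ι 𝕜) : HasFDerivAt det (traceMulCLM A.adjugate) A := by
  refine (detContinuousMultilinearMap.hasFDerivAt A).congr_fderiv
    (ContinuousLinearMap.ext fun v : Matrix ι ι 𝕜 => ?_)
  refine (ContinuousMultilinearMap.linearDeriv_apply _ _ _).trans ?_
  change ∑ i, (A.updateRow i (v i)).det = trace (A.adjugate * v)
  simp only [det_updateRow_eq_sum_mul_adjugate, trace, diag, mul_apply]
  rw [Finset.sum_comm]
  simp only [mul_comm]

theorem hasFDerivAt_log_abs_det {A : Matrix ι ι ℝ} (hA : A.det ≠ 0) :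
    HasFDerivAt (fun z : Matrix ι ι ℝ => Real.log |z.det|) (traceMulCLM A⁻¹) A := by
  simp only [Real.log_abs]
  refine ((Real.hasDerivAt_log hA).comp_hasFDerivAt A (hasFDerivAt_det A)).congr_fderiv ?_
  ext v
  change A.det⁻¹ * trace (A.adjugate * v) = trace (A⁻¹ * v)
  rw [inv_def, Ring.inverse_eq_inv', smul_mul, trace_smul, smul_eq_mul]

end Calculus

end Matrix

open Matrix

theorem log_det_self_dual (N : ℕ) (x y : Matrix (Fin N) (Fin N) ℝ) (hx : x.det ≠ 0)
    (hy : ∀ k n, y k n =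
      fderiv ℝ (fun z : Matrix (Fin N) (Fin N) ℝ => Real.log |z.det| + (N : ℝ) / 2)
        x (Matrix.single n k 1)) :
    (∑ n, ∑ k, x n k * y k n) - (Real.log |x.det| + (N : ℝ) / 2)
      = Real.log |y.det| + (N : ℝ) / 2 := by
  have hG : fderiv ℝ (fun z : Matrix (Fin N) (Fin N) ℝ => Real.log |z.det| + (N : ℝ) / 2) x
      = traceMulCLM x⁻¹ := ((hasFDerivAt_log_abs_det hx).add_const _).fderiv
  have hy_inv : y = x⁻¹ := by
    ext k n
    rw [hy, hG, traceMulCLM_apply,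
      trace_mul_single, MulOpposite.smul_eq_mul_unop, MulOpposite.unop_op, mul_one]
  have hpairing : ∑ n, ∑ k, x n k * y k n = N := by
    change trace (x * y) = N
    rw [hy_inv, mul_nonsing_inv x (isUnit_iff_ne_zero.mpr hx), trace_one, Fintype.card_fin]
  rw [hpairing, hy_inv, det_nonsing_inv, Ring.inverse_eq_inv', abs_inv, Real.log_inv]
  ring
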